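/- arXiv:2204.09938 — 2 statements merged into one kernel-verified Lean document; each statement's English description precedes it below -/
import Mathlib

section
/- Let X be a real random variable with continuous and strictly increasing cumulative distribution function F, let F̃ be a cumulative distribution function on ℝ, and let q ≥ 1. Then for every measurable map g : ℝ → ℝ such that g(X) has cumulative distribution function F̃, the transport cost satisfies E[|X − g(X)|^q] ≥ ∫₀¹ |F⁻¹(p) − F̃⁻¹(p)|^q dp. Combined with the equality for g = F̃⁻¹ ∘ F, this map is a minimizer of the Monge problem inf{E[|X − g(X)|^q] : g(X) ∼ F̃}. -/
/-!
Write `(s, t) ∈ straddleSet (a, b)` when `min a b ≤ s` and `t < max a b`; for `s ≤ t` this means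
that one of `a, b` is `≤ s` and the other is `> t`. The cost `|a - b| ^ q` is the `κ`-measure of
`straddleSet (a, b)` for a measure `κ` carried by the half-plane `s ≤ t`: Lebesgue measure on the
diagonal when `q = 1`, the density `q (q - 1) (t - s) ^ (q - 2)` when `q > 1`. By Tonelli, the cost
of any coupling `(X, Y)` is then `∫ P((s, t) ∈ straddleSet (X, Y)) dκ(s, t)`, and for `s ≤ t`

  `P(X ≤ s, t < Y) + P(Y ≤ s, t < X) ≥ (F s - G t)⁺ + (G s - F t)⁺`,

which dominates the Lebesgue measure of the same event for the quantile coupling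
`p ↦ (F⁻¹ p, G⁻¹ p)` on `(0, 1)`.
-/

open MeasureTheory ProbabilityTheory Set

/-- Generalized inverse (quantile function) of a cumulative distribution function:
`G⁻¹(p) = inf {x : ℝ | G x ≥ p}`. -/
noncomputable def quantileFn (G : ℝ → ℝ) (p : ℝ) : ℝ :=
  sInf {x : ℝ | p ≤ G x}

open Filter
open scoped ENNReal

section Quantile

variable (ν : Measure ℝ) {p : ℝ}

lemma bddBelow_setOf_le_cdf (hp : 0 < p) : BddBelow {x | p ≤ cdf ν x} := by
  obtain ⟨x₀, hx₀⟩ := ((tendsto_cdf_atBot ν).eventually (eventually_lt_nhds hp)).exists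
  exact ⟨x₀, fun y hy => le_of_not_gt fun hyx => (hy.trans (monotone_cdf ν hyx.le)).not_gt hx₀⟩

lemma nonempty_setOf_le_cdf (hp : p < 1) : {x | p ≤ cdf ν x}.Nonempty :=
  ((tendsto_cdf_atTop ν).eventually (eventually_gt_nhds hp)).exists.imp fun _ => le_of_lt

lemma quantileFn_cdf_le_iff (hp : p ∈ Ioo 0 1) {x : ℝ} :
    quantileFn (cdf ν) p ≤ x ↔ p ≤ cdf ν x := by
  refine ⟨fun h => ?_, fun h => csInf_le (bddBelow_setOf_le_cdf ν hp.1) h⟩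
  have hright : ∀ z, x < z → p ≤ cdf ν z := fun z hz => by
    obtain ⟨y, hy, hyz⟩ := (csInf_lt_iff (bddBelow_setOf_le_cdf ν hp.1)
      (nonempty_setOf_le_cdf ν hp.2)).1 (h.trans_lt hz)
    exact hy.trans (monotone_cdf ν hyz.le)
  exact ge_of_tendsto (((cdf ν).right_continuous x).mono Ioi_subset_Ici_self)
    (eventually_nhdsWithin_of_forall hright)

lemma aemeasurable_quantileFn_cdf :
    AEMeasurable (quantileFn (cdf ν)) (volume.restrict (Ioo 0 1)) :=
  aemeasurable_restrict_of_monotoneOn measurableSet_Ioo fun _ hp _ hp' hpp' =>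
    (quantileFn_cdf_le_iff ν hp).2 (hpp'.trans ((quantileFn_cdf_le_iff ν hp').1 le_rfl))

end Quantile

def straddleSet (x : ℝ × ℝ) : Set (ℝ × ℝ) :=
  {st | min x.1 x.2 ≤ st.1 ∧ st.2 < max x.1 x.2}

lemma measurableSet_setOf_mem_straddleSet :
    MeasurableSet {z : (ℝ × ℝ) × (ℝ × ℝ) | z.2 ∈ straddleSet z.1} := by
  simp only [straddleSet, ofPred_and]
  exact (measurableSet_le (by fun_prop) (by fun_prop)).inter
    (measurableSet_lt (by fun_prop) (by fun_prop))

lemma measurableSet_straddleSet (x : ℝ × ℝ) : MeasurableSet (straddleSet x) :=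
  measurable_prodMk_left measurableSet_setOf_mem_straddleSet

lemma mem_straddleSet_iff {st x : ℝ × ℝ} (hst : st.1 ≤ st.2) :
    st ∈ straddleSet x ↔ (x.1 ≤ st.1 ∧ st.2 < x.2) ∨ (x.2 ≤ st.1 ∧ st.2 < x.1) := by
  simp only [straddleSet, mem_ofPred_eq, min_le_iff, lt_max_iff]
  grind

lemma lintegral_measure_straddleSet_comm {α : Type*} [MeasurableSpace α] {ρ : Measure α}
    [SFinite ρ] {κ : Measure (ℝ × ℝ)} [SFinite κ] {Z : α → ℝ × ℝ} (hZ : AEMeasurable Z ρ) :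
    ∫⁻ a, κ (straddleSet (Z a)) ∂ρ = ∫⁻ st, ρ {a | st ∈ straddleSet (Z a)} ∂κ := by
  have hS := measurableSet_setOf_mem_straddleSet
  calc ∫⁻ a, κ (straddleSet (Z a)) ∂ρ
      = ∫⁻ x, κ (Prod.mk x ⁻¹' {z | z.2 ∈ straddleSet z.1}) ∂(ρ.map Z) :=
        (lintegral_map' (measurable_measure_prodMk_left hS).aemeasurable hZ).symm
    _ = ((ρ.map Z).prod κ) {z | z.2 ∈ straddleSet z.1} := (Measure.prod_apply hS).symm
    _ = ∫⁻ st, (ρ.map Z) ((·, st) ⁻¹' {z | z.2 ∈ straddleSet z.1}) ∂κ :=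
        Measure.prod_apply_symm hS
    _ = ∫⁻ st, ρ {a | st ∈ straddleSet (Z a)} ∂κ :=
        lintegral_congr fun st =>
          Measure.map_apply₀ hZ (measurable_prodMk_right hS).nullMeasurableSet

section RpowIntegrals

variable {a b r : ℝ}

lemma lintegral_Ico_mul_rpow_sub_left (hr : 0 < r) (hab : a ≤ b) :
    ∫⁻ t in Ico a b, ENNReal.ofReal (r * (t - a) ^ (r - 1)) = ENNReal.ofReal ((b - a) ^ r) := by
  have hint : IntervalIntegrable (fun t => r * (t - a) ^ (r - 1)) volume a b := by
    simpa using
      ((intervalIntegral.intervalIntegrable_rpow' (r := r - 1) (by linarith)).comp_sub_right a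
        (a := 0) (b := b - a)).const_mul r
  rw [setLIntegral_congr Ico_ae_eq_Ioc, ← ofReal_integral_eq_lintegral_ofReal
    ((intervalIntegrable_iff_integrableOn_Ioc_of_le hab).1 hint)
    ((ae_restrict_iff' measurableSet_Ioc).2 (ae_of_all _ fun t ht =>
      mul_nonneg hr.le (Real.rpow_nonneg (by linarith [ht.1]) _))),
    ← intervalIntegral.integral_of_le hab, intervalIntegral.integral_const_mul,
    intervalIntegral.integral_comp_sub_right (fun t => t ^ (r - 1)),
    integral_rpow (Or.inl (by linarith))]
  simp [Real.zero_rpow hr.ne', mul_div_cancel₀ _ hr.ne']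

lemma lintegral_Ico_mul_rpow_sub_right (hr : 0 < r) (hab : a ≤ b) :
    ∫⁻ t in Ico a b, ENNReal.ofReal (r * (b - t) ^ (r - 1)) = ENNReal.ofReal ((b - a) ^ r) := by
  have hint : IntervalIntegrable (fun t => r * (b - t) ^ (r - 1)) volume a b := by
    refine IntervalIntegrable.symm ?_
    simpa using
      ((intervalIntegral.intervalIntegrable_rpow' (r := r - 1) (by linarith)).comp_sub_left b
        (a := 0) (b := b - a)).const_mul r
  rw [setLIntegral_congr Ico_ae_eq_Ioc, ← ofReal_integral_eq_lintegral_ofReal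
    ((intervalIntegrable_iff_integrableOn_Ioc_of_le hab).1 hint)
    ((ae_restrict_iff' measurableSet_Ioc).2 (ae_of_all _ fun t ht =>
      mul_nonneg hr.le (Real.rpow_nonneg (by linarith [ht.2]) _))),
    ← intervalIntegral.integral_of_le hab, intervalIntegral.integral_const_mul,
    intervalIntegral.integral_comp_sub_left (fun t => t ^ (r - 1)),
    integral_rpow (Or.inl (by linarith))]
  simp [Real.zero_rpow hr.ne', mul_div_cancel₀ _ hr.ne']

end RpowIntegrals

section CostMeasure

variable {q : ℝ}

lemma lintegral_triangle_mul_rpow_sub (hq : 1 < q) {m M : ℝ} (hmM : m ≤ M) :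
    ∫⁻ st in {st : ℝ × ℝ | m ≤ st.1 ∧ st.1 ≤ st.2 ∧ st.2 < M},
      ENNReal.ofReal (q * (q - 1) * (st.2 - st.1) ^ (q - 2)) = ENNReal.ofReal ((M - m) ^ q) := by
  set T := {st : ℝ × ℝ | m ≤ st.1 ∧ st.1 ≤ st.2 ∧ st.2 < M}
  set f : ℝ × ℝ → ℝ≥0∞ := fun st => ENNReal.ofReal (q * (q - 1) * (st.2 - st.1) ^ (q - 2))
  have hf : Measurable f := by fun_prop
  have hT : MeasurableSet T := by
    simp only [T, ofPred_and]
    refine (measurableSet_le ?_ ?_).inter ((measurableSet_le ?_ ?_).inter (measurableSet_lt ?_ ?_))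
      <;> fun_prop
  have inner : ∀ s ∈ Ico m M,
      ∫⁻ t in Ico s M, f (s, t) = ENNReal.ofReal (q * (M - s) ^ (q - 1)) := by
    intro s hs
    have hsplit : ∀ t,
        f (s, t) = ENNReal.ofReal q * ENNReal.ofReal ((q - 1) * (t - s) ^ (q - 1 - 1)) := by
      intro t
      rw [← ENNReal.ofReal_mul (by linarith), show q - 1 - 1 = q - 2 by ring, ← mul_assoc]
    simp_rw [hsplit]
    rw [lintegral_const_mul _ (by fun_prop), lintegral_Ico_mul_rpow_sub_left (by linarith) hs.2.le,
      ← ENNReal.ofReal_mul (by linarith)]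
  have slice : ∀ s, ∫⁻ t, T.indicator f (s, t) =
      (Ico m M).indicator (fun s => ∫⁻ t in Ico s M, f (s, t)) s := by
    intro s
    by_cases hs : s ∈ Ico m M
    · rw [indicator_of_mem hs, ← lintegral_indicator measurableSet_Ico]
      congr with t
      simp [indicator, T, hs.1]
    · rw [indicator_of_notMem hs]
      exact (lintegral_congr fun t => indicator_of_notMem
        (fun h => hs ⟨h.1, h.2.1.trans_lt h.2.2⟩) _).trans lintegral_zero
  rw [← lintegral_indicator hT, Measure.volume_eq_prod,
    lintegral_prod _ (hf.indicator hT).aemeasurable]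
  simp_rw [slice]
  rw [lintegral_indicator measurableSet_Ico, setLIntegral_congr_fun measurableSet_Ico inner,
    lintegral_Ico_mul_rpow_sub_right (by linarith) hmM]

lemma withDensity_mul_rpow_sub_straddleSet (hq : 1 < q) (x : ℝ × ℝ) :
    (volume.restrict {st : ℝ × ℝ | st.1 ≤ st.2}).withDensity
        (fun st => ENNReal.ofReal (q * (q - 1) * (st.2 - st.1) ^ (q - 2))) (straddleSet x) =
      ENNReal.ofReal (|x.1 - x.2| ^ q) := by
  have hslice : straddleSet x ∩ {st : ℝ × ℝ | st.1 ≤ st.2} =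
      {st | min x.1 x.2 ≤ st.1 ∧ st.1 ≤ st.2 ∧ st.2 < max x.1 x.2} := by
    ext st
    simp only [straddleSet, mem_inter_iff, mem_ofPred_eq]
    tauto
  rw [withDensity_apply _ (measurableSet_straddleSet x),
    Measure.restrict_restrict (measurableSet_straddleSet x), hslice,
    lintegral_triangle_mul_rpow_sub hq min_le_max, max_sub_min_eq_abs']

lemma exists_measure_ofReal_abs_sub_rpow_eq (hq : 1 ≤ q) :
    ∃ κ : Measure (ℝ × ℝ), SFinite κ ∧ (∀ᵐ st ∂κ, st.1 ≤ st.2) ∧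
      ∀ a b : ℝ, ENNReal.ofReal (|a - b| ^ q) = κ (straddleSet (a, b)) := by
  have hle : MeasurableSet {st : ℝ × ℝ | st.1 ≤ st.2} :=
    measurableSet_le measurable_fst measurable_snd
  rcases hq.eq_or_lt with rfl | hq
  · refine ⟨volume.map fun s => (s, s), inferInstance,
      (ae_map_iff (by fun_prop) hle).2 (ae_of_all _ fun s => le_rfl), fun a b => ?_⟩
    have hdiag : (fun s : ℝ => (s, s)) ⁻¹' straddleSet (a, b) = Ico (min a b) (max a b) := rfl
    rw [Real.rpow_one, Measure.map_apply (by fun_prop) (measurableSet_straddleSet _), hdiag,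
      Real.volume_Ico, max_sub_min_eq_abs']
  · exact ⟨(volume.restrict {st : ℝ × ℝ | st.1 ≤ st.2}).withDensity
        fun st => ENNReal.ofReal (q * (q - 1) * (st.2 - st.1) ^ (q - 2)), inferInstance,
      (withDensity_absolutelyContinuous _ _).ae_le (ae_restrict_mem hle),
      fun a b => (withDensity_mul_rpow_sub_straddleSet hq (a, b)).symm⟩

end CostMeasure

section Comonotone

variable {Ω : Type*} [MeasurableSpace Ω] {μ : Measure Ω} [IsProbabilityMeasure μ] {X Y : Ω → ℝ}

lemma restrict_Ioo_quantileFn_le_lt_le (hX : Measurable X) (hY : Measurable Y) (s t : ℝ) :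
    volume.restrict (Ioo 0 1)
        {p | quantileFn (cdf (μ.map X)) p ≤ s ∧ t < quantileFn (cdf (μ.map Y)) p} ≤
      μ {ω | X ω ≤ s ∧ t < Y ω} := by
  have := Measure.isProbabilityMeasure_map (μ := μ) hX.aemeasurable
  have := Measure.isProbabilityMeasure_map (μ := μ) hY.aemeasurable
  have hsub : {p | quantileFn (cdf (μ.map X)) p ≤ s ∧ t < quantileFn (cdf (μ.map Y)) p} ∩
      Ioo 0 1 ⊆ Ioc (cdf (μ.map Y) t) (cdf (μ.map X) s) := fun p ⟨⟨hps, htp⟩, hp⟩ =>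
    ⟨lt_of_not_ge fun h => htp.not_ge ((quantileFn_cdf_le_iff _ hp).2 h),
      (quantileFn_cdf_le_iff _ hp).1 hps⟩
  calc _ ≤ volume (Ioc (cdf (μ.map Y) t) (cdf (μ.map X) s)) := by
        rw [Measure.restrict_apply' measurableSet_Ioo]
        exact measure_mono hsub
    _ = μ {ω | X ω ≤ s} - μ {ω | Y ω ≤ t} := by
        rw [Real.volume_Ioc, ENNReal.ofReal_sub _ (cdf_nonneg _ _), ofReal_cdf, ofReal_cdf,
          Measure.map_apply hX measurableSet_Iic, Measure.map_apply hY measurableSet_Iic]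
        rfl
    _ ≤ μ ({ω | X ω ≤ s} \ {ω | Y ω ≤ t}) := le_measure_sdiff
    _ = μ {ω | X ω ≤ s ∧ t < Y ω} := by
        congr 1
        ext ω
        simp [not_le]

lemma restrict_Ioo_quantileFn_straddleSet_le (hX : Measurable X) (hY : Measurable Y)
    {st : ℝ × ℝ} (hst : st.1 ≤ st.2) :
    volume.restrict (Ioo 0 1)
        {p | st ∈ straddleSet (quantileFn (cdf (μ.map X)) p, quantileFn (cdf (μ.map Y)) p)} ≤
      μ {ω | st ∈ straddleSet (X ω, Y ω)} := by
  simp only [mem_straddleSet_iff hst, ofPred_or]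
  have hdisj : Disjoint {ω | X ω ≤ st.1 ∧ st.2 < Y ω} {ω | Y ω ≤ st.1 ∧ st.2 < X ω} :=
    disjoint_left.2 fun ω hXY hYX => (hXY.1.trans hst).not_gt hYX.2
  calc _ ≤ _ := measure_union_le _ _
    _ ≤ _ := add_le_add (restrict_Ioo_quantileFn_le_lt_le hX hY _ _)
        (restrict_Ioo_quantileFn_le_lt_le hY hX _ _)
    _ = _ := (measure_union hdisj ((hY measurableSet_Iic).inter (hX measurableSet_Ioi))).symm

end Comonotone

theorem transport_cost_ge_quantile_dist_general
    {Ω : Type*} [MeasurableSpace Ω] (μ : Measure Ω) [IsProbabilityMeasure μ]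
    (X : Ω → ℝ) (hX : Measurable X)
    (ν : Measure ℝ)
    (q : ℝ) (hq : 1 ≤ q)
    (g : ℝ → ℝ) (hg : Measurable g)
    (hgX : ∀ x : ℝ, cdf (μ.map fun ω => g (X ω)) x = cdf ν x) :
    ∫⁻ ω, ENNReal.ofReal (|X ω - g (X ω)| ^ q) ∂μ ≥
      ∫⁻ p in Ioo (0 : ℝ) 1,
        ENNReal.ofReal (|quantileFn (cdf (μ.map X)) p - quantileFn (cdf ν) p| ^ q) := by
  have hY : Measurable fun ω => g (X ω) := hg.comp hX
  have hν : (cdf ν : ℝ → ℝ) = cdf (μ.map fun ω => g (X ω)) := funext fun x => (hgX x).symm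
  obtain ⟨κ, hκ, hκ_le, hcost⟩ := exists_measure_ofReal_abs_sub_rpow_eq hq
  simp only [hν, hcost]
  rw [ge_iff_le, lintegral_measure_straddleSet_comm (hX.prodMk hY).aemeasurable,
    lintegral_measure_straddleSet_comm
      ((aemeasurable_quantileFn_cdf _).prodMk (aemeasurable_quantileFn_cdf _))]
  exact lintegral_mono_ae
    (hκ_le.mono fun st hst => restrict_Ioo_quantileFn_straddleSet_le hX hY hst)

/-- **Lower bound for the Monge problem in one dimension.**
If `X` has continuous, strictly increasing cdf `F`, `F̃` is the cdf of a probability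
distribution `ν` on `ℝ`, and `q ≥ 1`, then every measurable `g : ℝ → ℝ` such that `g(X)`
has cdf `F̃` satisfies `E[|X − g(X)|^q] ≥ ∫₀¹ |F⁻¹(p) − F̃⁻¹(p)|^q dp`.
(Together with the equality attained by `g = F̃⁻¹ ∘ F`, this shows that map minimizes
the Monge problem.) -/
theorem transport_cost_ge_quantile_dist
    {Ω : Type*} [MeasurableSpace Ω] (μ : Measure Ω) [IsProbabilityMeasure μ]
    (X : Ω → ℝ) (hX : Measurable X)
    (hcont : Continuous (cdf (μ.map X)))
    (hmono : StrictMono (cdf (μ.map X)))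
    (ν : Measure ℝ) [IsProbabilityMeasure ν]
    (q : ℝ) (hq : 1 ≤ q)
    (g : ℝ → ℝ) (hg : Measurable g)
    (hgX : ∀ x : ℝ, cdf (μ.map fun ω => g (X ω)) x = cdf ν x) :
    ∫⁻ ω, ENNReal.ofReal (|X ω - g (X ω)| ^ q) ∂μ ≥
      ∫⁻ p in Ioo (0 : ℝ) 1,
        ENNReal.ofReal (|quantileFn (cdf (μ.map X)) p - quantileFn (cdf ν) p| ^ q) :=
  transport_cost_ge_quantile_dist_general μ X hX ν q hq g hg hgX
end

section
/- Let Z and X be real random variables on a probability space (Ω, μ), let ρ be the law of the pair (Z, X), and let F_{X|z} denote the conditional cumulative distribution function of X given Z = z (the conditional cdf from the disintegration of ρ). Suppose that for ρ-almost every z, the function x ↦ F_{X|z}(x) is continuous. Then the random variable U(ω) = F_{X|Z(ω)}(X(ω)) is uniformly distributed on [0,1] and is independent of Z. -/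
/-!
Disintegrate the joint law as `ρ = ρ.fst ⊗ κ`, where `κ z` is the law with cdf `F_{X|z}`.
For a continuous cdf `F`, the image of its law under `F` itself is uniform on `[0, 1]`: the set
`{F ≤ t}` is a half-line `Iic a` with `F a = t`. Hence, for `ρ.fst`-a.e. `z`, the image of `κ z`
under `F_{X|z}` does not depend on `z`, so `(z, x) ↦ (z, F_{X|z}(x))` maps `ρ` to the product
`ρ.fst × uniform`. This is the joint law of `(Z, U)`, which gives both claims at once.
-/

open MeasureTheory ProbabilityTheory Set Filter Topology

section Order

variable {α β : Type*} [ConditionallyCompleteLinearOrder α] [TopologicalSpace α] [OrderTopology α]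
  [DenselyOrdered α] [LinearOrder β] [TopologicalSpace β] [OrderClosedTopology β]

theorem Monotone.exists_preimage_Iic_eq_Iic {f : α → β} (hf : Monotone f) (hc : Continuous f)
    {t : β} {b : α} (hne : (f ⁻¹' Iic t).Nonempty) (hb : t < f b) :
    ∃ a, f a = t ∧ f ⁻¹' Iic t = Iic a := by
  have hbdd : BddAbove (f ⁻¹' Iic t) := ⟨b, fun x hx => (hf.reflect_lt (hx.trans_lt hb)).le⟩
  set a := sSup (f ⁻¹' Iic t)
  have ha : f a ≤ t := (isClosed_Iic.preimage hc).csSup_mem hne hbdd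
  refine ⟨a, le_antisymm ha ?_, ?_⟩
  · -- every point to the right of `a` lies above `t`, and `f` is right-continuous at `a`
    have : (𝓝[>] a).NeBot := nhdsGT_neBot_of_exists_gt ⟨b, hf.reflect_lt (ha.trans_lt hb)⟩
    refine _root_.ge_of_tendsto (hc.continuousWithinAt (s := Ioi a)).tendsto ?_
    filter_upwards [self_mem_nhdsWithin] with x hx
    exact le_of_lt (not_le.1 fun h => (not_le.2 hx) (le_csSup hbdd h))
  · ext x
    exact ⟨fun hx => le_csSup hbdd hx, fun hx => (hf hx).trans ha⟩

end Order

namespace StieltjesFunction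

variable (f : StieltjesFunction ℝ) (hc : Continuous f) (h0 : Tendsto f atBot (𝓝 0))
  (h1 : Tendsto f atTop (𝓝 1))
include hc h0 h1

theorem measure_preimage_Iic_of_continuous {t : ℝ} (ht0 : 0 ≤ t) (ht1 : t < 1) :
    f.measure (f ⁻¹' Iic t) = ENNReal.ofReal t := by
  rcases (f ⁻¹' Iic t).eq_empty_or_nonempty with hS | hS
  · obtain rfl : t = 0 := by
      refine le_antisymm ?_ ht0
      by_contra! h
      obtain ⟨x, hx⟩ := (h0.eventually_lt_const h).exists
      exact eq_empty_iff_forall_notMem.1 hS x hx.le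
    simp [hS]
  · obtain ⟨b, hb⟩ := (h1.eventually_const_lt ht1).exists
    obtain ⟨a, rfl, ha⟩ := f.mono.exists_preimage_Iic_eq_Iic hc hS hb
    rw [ha, f.measure_Iic h0, sub_zero]

theorem map_measure_self_of_continuous :
    f.measure.map f = volume.restrict (Icc 0 1) := by
  have : IsProbabilityMeasure f.measure := f.isProbabilityMeasure h0 h1
  have hnonneg (x : ℝ) : 0 ≤ f x :=
    le_of_tendsto h0 (eventually_atBot.2 ⟨x, fun y hy => f.mono hy⟩)
  have hle1 (x : ℝ) : f x ≤ 1 :=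
    ge_of_tendsto h1 (eventually_atTop.2 ⟨x, fun y hy => f.mono hy⟩)
  refine Measure.ext_of_Iic _ _ fun t => ?_
  rw [Measure.map_apply hc.measurable measurableSet_Iic, Measure.restrict_apply measurableSet_Iic]
  have hIcc : Iic t ∩ Icc 0 1 = Icc 0 (min t 1) := by
    ext x
    simp only [mem_inter_iff, mem_Iic, mem_Icc, le_min_iff]
    tauto
  rw [hIcc, Real.volume_Icc, sub_zero]
  rcases lt_or_ge t 0 with ht0 | ht0
  · have : f ⁻¹' Iic t = ∅ :=
      eq_empty_of_forall_notMem fun x hx => (hnonneg x).not_gt (hx.trans_lt ht0)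
    rw [this, measure_empty, ENNReal.ofReal_of_nonpos ((min_le_left t 1).trans ht0.le)]
  rcases lt_or_ge t 1 with ht1 | ht1
  · rw [f.measure_preimage_Iic_of_continuous hc h0 h1 ht0 ht1, min_eq_left ht1.le]
  · have : f ⁻¹' Iic t = univ := eq_univ_of_forall fun x => (hle1 x).trans ht1
    rw [this, MeasureTheory.measure_univ, min_eq_right ht1, ENNReal.ofReal_one]

end StieltjesFunction

namespace MeasureTheory.Measure

variable {α β γ : Type*} [MeasurableSpace α] [MeasurableSpace β] [MeasurableSpace γ]

theorem map_compProd_prodMk_eq_prod {μ : Measure α} [SFinite μ] {κ : Kernel α β}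
    [IsSFiniteKernel κ] {ν : Measure γ} [SFinite ν] {f : α × β → γ} (hf : Measurable f)
    (h : ∀ᵐ a ∂μ, (κ a).map (fun b => f (a, b)) = ν) :
    (μ ⊗ₘ κ).map (fun p => (p.1, f p)) = μ.prod ν := by
  ext s hs
  rw [map_apply (measurable_fst.prodMk hf) hs, compProd_apply (measurable_fst.prodMk hf hs),
    prod_apply hs]
  refine lintegral_congr_ae (h.mono fun a ha => ?_)
  dsimp only
  rw [← ha, map_apply (by fun_prop) (measurable_prodMk_left hs)]
  rfl

end MeasureTheory.Measure

namespace ProbabilityTheory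

variable {α : Type*} [MeasurableSpace α]

theorem Kernel.measurable_apply_Iic (κ : Kernel α ℝ) [IsSFiniteKernel κ] :
    Measurable fun p : α × ℝ => κ p.1 (Iic p.2) :=
  (Kernel.prodMkRight ℝ κ).measurable_kernel_prodMk_left
    (measurableSet_le measurable_snd measurable_fst.snd)

noncomputable def condCDFKernel (ρ : Measure (α × ℝ)) : Kernel α ℝ :=
  ⟨fun a => (condCDF ρ a).measure, measurable_measure_condCDF ρ⟩

variable (ρ : Measure (α × ℝ))

theorem condCDFKernel_apply (a : α) : condCDFKernel ρ a = (condCDF ρ a).measure := rfl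

instance : IsMarkovKernel (condCDFKernel ρ) :=
  ⟨fun a => by rw [condCDFKernel_apply]; infer_instance⟩

theorem fst_compProd_condCDFKernel [IsFiniteMeasure ρ] : ρ.fst ⊗ₘ condCDFKernel ρ = ρ := by
  ext s hs
  rw [Measure.compProd_apply hs]
  exact lintegral_toKernel_mem (isCondKernelCDF_condCDF ρ) () hs

theorem measurable_condCDF_uncurry : Measurable fun p : α × ℝ => condCDF ρ p.1 p.2 := by
  have h (p : α × ℝ) : condCDF ρ p.1 p.2 = (condCDFKernel ρ p.1 (Iic p.2)).toReal := by
    rw [condCDFKernel_apply, measure_condCDF_Iic, ENNReal.toReal_ofReal (condCDF_nonneg ρ _ _)]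
  simp_rw [h]
  exact (condCDFKernel ρ).measurable_apply_Iic.ennreal_toReal

theorem map_eq_and_indepFun_of_map_prodMk_eq_prod {Ω β γ : Type*}
    [MeasurableSpace Ω] [MeasurableSpace β] [MeasurableSpace γ] {μ : Measure Ω}
    [IsProbabilityMeasure μ] {Y : Ω → β} {V : Ω → γ} (hY : AEMeasurable Y μ)
    (hV : AEMeasurable V μ) {ν : Measure γ} [SFinite ν]
    (h : μ.map (fun ω => (Y ω, V ω)) = (μ.map Y).prod ν) :
    μ.map V = ν ∧ IndepFun V Y μ := by
  have : IsProbabilityMeasure (μ.map Y) := Measure.isProbabilityMeasure_map hY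
  have hV_law : μ.map V = ν := by rw [← Measure.snd_map_prodMk₀ hY, h, Measure.snd_prod]
  refine ⟨hV_law, IndepFun.symm ?_⟩
  rwa [indepFun_iff_map_prod_eq_prod_map_map hY hV, hV_law]

end ProbabilityTheory

/-- **Conditional probability integral transform.**
Let `ρ` be the joint law of `(Z, X)` and `F_{X|z} = condCDF ρ z` the conditional cdf of `X`
given `Z = z`. If for `ρ`-a.e. `z` the conditional cdf is continuous, then
`U(ω) = F_{X|Z(ω)}(X(ω))` is uniformly distributed on `[0,1]` and independent of `Z`. -/
theorem condCDF_apply_uniform_and_indep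
    {Ω : Type*} [MeasurableSpace Ω] (μ : Measure Ω) [IsProbabilityMeasure μ]
    (Z X : Ω → ℝ) (hZ : Measurable Z) (hX : Measurable X)
    (ρ : Measure (ℝ × ℝ)) (hρ : ρ = μ.map fun ω => (Z ω, X ω))
    (hcont : ∀ᵐ z ∂ρ.fst, Continuous (condCDF ρ z)) :
    Measure.map (fun ω => condCDF ρ (Z ω) (X ω)) μ = volume.restrict (Icc (0 : ℝ) 1) ∧
      IndepFun (fun ω => condCDF ρ (Z ω) (X ω)) Z μ := by
  have hZX : Measurable fun ω => (Z ω, X ω) := hZ.prodMk hX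
  have : IsProbabilityMeasure ρ := hρ ▸ Measure.isProbabilityMeasure_map hZX.aemeasurable
  have hF := measurable_condCDF_uncurry ρ
  have hlaw := Measure.map_compProd_prodMk_eq_prod (κ := condCDFKernel ρ) hF <|
    hcont.mono fun z hz => (condCDF ρ z).map_measure_self_of_continuous hz
      (tendsto_condCDF_atBot ρ z) (tendsto_condCDF_atTop ρ z)
  have hfst : ρ.fst = μ.map Z := hρ ▸ Measure.fst_map_prodMk hX
  rw [fst_compProd_condCDFKernel, hfst] at hlaw
  refine map_eq_and_indepFun_of_map_prodMk_eq_prod hZ.aemeasurable (hF.comp hZX).aemeasurable ?_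
  have hcomp := Measure.map_map (μ := μ) (measurable_fst.prodMk hF) hZX
  rw [← hρ] at hcomp
  exact hcomp.symm.trans hlaw
end
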